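/- arXiv:1108.3623 — 9 statements merged into one kernel-verified Lean document; each statement's English description precedes it below -/
import Mathlib

section
/- Let w be an infinite partial word over an alphabet of size k. If p_w(n+1) = p_w(n) for some n, then p_w is bounded. -/
open Set

variable {A : Type*}

/-- The full word `u` occurs at position `i` in the partial word `w`
(`none` is the hole symbol, compatible with every letter). -/
def Occurs (w : ℕ → Option A) (u : List A) (i : ℕ) : Prop :=
  ∀ j : Fin u.length, w (i + (j : ℕ)) = none ∨ w (i + (j : ℕ)) = some (u.get j)

/-- `u` is a subword of `w`: it occurs at some position. -/
def IsSubword (w : ℕ → Option A) (u : List A) : Prop :=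
  ∃ i, Occurs w u i

/-- `u` is a recurrent subword of `w`: it occurs at infinitely many positions. -/
def IsRecSubword (w : ℕ → Option A) (u : List A) : Prop :=
  {i | Occurs w u i}.Infinite

/-- Subword complexity: number of distinct full words of length `n`
that are subwords of `w`. -/
noncomputable def pcomp (w : ℕ → Option A) (n : ℕ) : ℕ :=
  {u : List A | u.length = n ∧ IsSubword w u}.ncard

/-- Number of recurrent subwords of length `n`. -/
noncomputable def rcomp (w : ℕ → Option A) (n : ℕ) : ℕ :=
  {u : List A | u.length = n ∧ IsRecSubword w u}.ncard

/-- `w` is recurrent: every subword occurs infinitely often. -/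
def Recurrent (w : ℕ → Option A) : Prop :=
  ∀ u : List A, IsSubword w u → IsRecSubword w u

/-- `w` is ultimately recurrent: some shift of `w` is recurrent. -/
def UltimatelyRecurrent (w : ℕ → Option A) : Prop :=
  ∃ p, Recurrent (fun i => w (i + p))

/-- `c` is a completion of `w`: it agrees with `w` at every non-hole position. -/
def IsCompletion (w : ℕ → Option A) (c : ℕ → A) : Prop :=
  ∀ i, ∀ a : A, w i = some a → c i = a

/-- `w` is uniformly recurrent: for every subword `u` there is a window size `m`
such that every factor of `w` of length `m` contains an occurrence of `u`. -/
def UniformlyRecurrent (w : ℕ → Option A) : Prop :=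
  ∀ u : List A, IsSubword w u →
    ∃ m, ∀ i, ∃ j, i ≤ j ∧ j + u.length ≤ i + m ∧ Occurs w u j

/-- Every factor of `w` of length `m` contains every length-`n` subword of `w`. -/
def GoodWindow (w : ℕ → Option A) (n m : ℕ) : Prop :=
  ∀ u : List A, u.length = n → IsSubword w u →
    ∀ i, ∃ j, i ≤ j ∧ j + n ≤ i + m ∧ Occurs w u j

/-- The recurrence function `R_w(n)`: the least window size `m` such that every
factor of length `m` contains every subword of length `n`. -/
noncomputable def Rfun (w : ℕ → Option A) (n : ℕ) : ℕ :=
  sInf {m | GoodWindow w n m}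

/-- `w` is ultimately periodic: from some position on, `w` is compatible with a
periodic sequence of letters. -/
def UltimatelyPeriodic (w : ℕ → Option A) : Prop :=
  ∃ N p, 0 < p ∧ ∃ a : ℕ → A, ∀ i, N ≤ i → w i = none ∨ w i = some (a (i % p))

lemma occurs_iff (w : ℕ → Option A) (u : List A) (i : ℕ) :
    Occurs w u i ↔ ∀ j, (hj : j < u.length) →
      w (i + j) = none ∨ w (i + j) = some (u[j]) := by
  constructor
  · intro h j hj; exact h ⟨j, hj⟩
  · intro h j; exact h j j.2

lemma occurs_take {w : ℕ → Option A} {u : List A} {i : ℕ} (h : Occurs w u i) (k : ℕ) :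
    Occurs w (u.take k) i := by
  rw [occurs_iff] at h ⊢
  intro j hj
  have hj' : j < u.length := lt_of_lt_of_le hj (by simp [List.length_take]) |>.trans_le le_rfl
  rw [List.getElem_take]
  exact h j hj'

lemma occurs_drop {w : ℕ → Option A} {u : List A} {i : ℕ} (h : Occurs w u i) (k : ℕ) :
    Occurs w (u.drop k) (i + k) := by
  rw [occurs_iff] at h ⊢
  intro j hj
  rw [List.getElem_drop]
  have : i + k + j = i + (k + j) := by ring
  rw [this]
  exact h (k + j) (by simp at hj; omega)

lemma finS (w : ℕ → Option A) (m : ℕ) [Finite A] :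
    {u : List A | u.length = m ∧ IsSubword w u}.Finite :=
  (List.finite_length_eq A m).subset (fun u hu => hu.1)

/-- extension -/
lemma exists_ext [Nonempty A] {w : ℕ → Option A} {u : List A} (h : IsSubword w u) :
    ∃ a : A, IsSubword w (u ++ [a]) ∧ (u ++ [a]).length = u.length + 1 := by
  obtain ⟨i, hi⟩ := h
  have : ∃ a : A, w (i + u.length) = none ∨ w (i + u.length) = some a := by
    cases hw : w (i + u.length) with
    | none => exact ⟨Classical.arbitrary A, Or.inl rfl⟩
    | some a => exact ⟨a, Or.inr rfl⟩
  obtain ⟨a, ha⟩ := this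
  refine ⟨a, ⟨i, ?_⟩, by simp⟩
  rw [occurs_iff]
  intro j hj
  simp only [List.length_append, List.length_singleton] at hj
  rcases lt_or_eq_of_le (Nat.lt_succ_iff.mp hj) with hlt | heq
  · rw [List.getElem_append_left hlt]
    exact (occurs_iff w u i).mp hi j hlt
  · subst heq
    rw [List.getElem_append_right (le_refl _)]
    simpa using ha

lemma pcomp_mono [Finite A] [Nonempty A] (w : ℕ → Option A) (m : ℕ) :
    pcomp w m ≤ pcomp w (m + 1) := by
  have hsub : {u : List A | u.length = m ∧ IsSubword w u} ⊆
      (fun u : List A => u.take m) '' {u : List A | u.length = m + 1 ∧ IsSubword w u} := by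
    rintro u ⟨hlen, hsw⟩
    obtain ⟨a, ha, hlen'⟩ := exists_ext hsw
    exact ⟨u ++ [a], ⟨by omega, ha⟩, by simp [hlen]⟩
  calc pcomp w m ≤ ((fun u : List A => u.take m) ''
          {u : List A | u.length = m + 1 ∧ IsSubword w u}).ncard :=
        Set.ncard_le_ncard hsub ((finS w (m+1)).image _)
    _ ≤ pcomp w (m + 1) := Set.ncard_image_le (finS w (m+1))

lemma image_take [Finite A] [Nonempty A] (w : ℕ → Option A) (m : ℕ) :
    (fun u : List A => u.take m) '' {u : List A | u.length = m + 1 ∧ IsSubword w u}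
      = {u : List A | u.length = m ∧ IsSubword w u} := by
  apply Set.Subset.antisymm
  · rintro _ ⟨u, ⟨hlen, i, hi⟩, rfl⟩
    exact ⟨by simp [hlen], i, occurs_take hi m⟩
  · rintro u ⟨hlen, hsw⟩
    obtain ⟨a, ha, _⟩ := exists_ext hsw
    exact ⟨u ++ [a], ⟨by omega, ha⟩, by simp [hlen]⟩


theorem stmt2 [Fintype A] (w : ℕ → Option A) (n : ℕ)
    (h : pcomp w (n + 1) = pcomp w n) :
    ∃ C, ∀ m, pcomp w m ≤ C := by
  cases isEmpty_or_nonempty A with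
  | inl hA =>
    refine ⟨1, fun m => ?_⟩
    have : {u : List A | u.length = m ∧ IsSubword w u}.Finite := finS w m
    refine (Set.ncard_le_one this).mpr ?_
    intro u hu v hv
    have hu' : u = [] := by
      cases u with
      | nil => rfl
      | cons a _ => exact (hA.false a).elim
    have hv' : v = [] := by
      cases v with
      | nil => rfl
      | cons a _ => exact (hA.false a).elim
    rw [hu', hv']
  | inr hA =>
    have hinjn : Set.InjOn (fun u : List A => u.take n)
        {u : List A | u.length = n + 1 ∧ IsSubword w u} := by
      apply Set.injOn_of_ncard_image_eq _ (finS w (n+1))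
      rw [image_take]
      exact h.symm
    have hinj : ∀ m, n ≤ m → Set.InjOn (fun u : List A => u.take m)
        {u : List A | u.length = m + 1 ∧ IsSubword w u} := by
      intro m hnm u hu v hv huv
      simp only [Set.mem_setOf_eq] at hu hv
      simp only at huv
      have hu' : u.drop (m - n) ∈ {u : List A | u.length = n + 1 ∧ IsSubword w u} := by
        obtain ⟨i, hi⟩ := hu.2
        exact ⟨by simp [hu.1]; omega, i + (m - n), occurs_drop hi (m - n)⟩
      have hv' : v.drop (m - n) ∈ {u : List A | u.length = n + 1 ∧ IsSubword w u} := by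
        obtain ⟨i, hi⟩ := hv.2
        exact ⟨by simp [hv.1]; omega, i + (m - n), occurs_drop hi (m - n)⟩
      have h1 : (u.take m).drop (m - n) = (u.drop (m - n)).take n := by
        rw [List.drop_take]; congr 1; omega
      have h2 : (v.take m).drop (m - n) = (v.drop (m - n)).take n := by
        rw [List.drop_take]; congr 1; omega
      have hdt : (u.drop (m - n)).take n = (v.drop (m - n)).take n := by
        rw [← h1, ← h2, huv]
      have heq : u.drop (m - n) = v.drop (m - n) := hinjn hu' hv' hdt
      apply List.ext_getElem (by omega)
      intro j hj hj'
      rcases Nat.lt_succ_iff_lt_or_eq.mp (show j < m + 1 by omega) with h1 | h1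
      · have hjt : j < (u.take m).length := by simp [hu.1]; omega
        have hjt' : j < (v.take m).length := by simp [hv.1]; omega
        have : (u.take m)[j]'hjt = (v.take m)[j]'hjt' := by simp only [huv]
        simpa using this
      · have e1 : (u.drop (m - n))[n]'(by simp [hu.1]; omega) = u[j]'hj := by
          rw [List.getElem_drop]; congr 1; omega
        have e2 : (v.drop (m - n))[n]'(by simp [hv.1]; omega) = v[j]'hj' := by
          rw [List.getElem_drop]; congr 1; omega
        rw [← e1, ← e2]
        exact List.getElem_of_eq heq _
    have hdec : ∀ m, n ≤ m → pcomp w (m + 1) ≤ pcomp w m := by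
      intro m hnm
      have : pcomp w (m + 1) = ((fun u : List A => u.take m) ''
          {u : List A | u.length = m + 1 ∧ IsSubword w u}).ncard :=
        (Set.ncard_image_of_injOn (hinj m hnm)).symm
      rw [this, image_take]
      exact le_rfl
    have hmono : Monotone (pcomp w) := monotone_nat_of_le_succ (pcomp_mono w)
    refine ⟨pcomp w n, fun m => ?_⟩
    rcases le_or_gt m n with hmn | hmn
    · exact hmono hmn
    · obtain ⟨k, rfl⟩ := Nat.exists_eq_add_of_le hmn.le
      clear hmn
      induction k with
      | zero => simp
      | succ k ih => exact le_trans (hdec (n + k) (by omega)) ih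
end

section
/- If w is an infinite recurrent partial word with a positive but finite number of holes, then w is not ultimately periodic (i.e., w cannot be written as x·v where x is a finite partial word and v is a periodic infinite partial word). -/
open Set

variable {A : Type*}

/-!
Fill a hole `h` of `w` with an arbitrary letter `d` and the other holes arbitrarily; the prefix
of length `h + p + 1` of this completion occurs at `0`, hence by recurrence also beyond the last
hole and beyond the start `N` of the periodic part. There it is read off the periodic word, so its
letters at `h` and `h + p` agree. The letter at `h + p` does not depend on `d`, so `d` is
determined, which is absurd over an alphabet with two letters.
-/

theorem IsCompletion.occurs_ofFn {w : ℕ → Option A} {c : ℕ → A} (hc : IsCompletion w c)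
    (i n : ℕ) : Occurs w (List.ofFn fun j : Fin n => c (i + j)) i := by
  intro j
  cases hw : w (i + j) with
  | none => exact Or.inl rfl
  | some x => simp [hc _ _ hw]

theorem Occurs.getElem_eq_of_periodic {w : ℕ → Option A} {u : List A} {i N p : ℕ}
    {a : ℕ → A} (hocc : Occurs w u i)
    (ha : ∀ k, N ≤ k → w k = none ∨ w k = some (a (k % p)))
    (hN : N ≤ i) (hfull : ∀ k, i ≤ k → w k ≠ none) (k : ℕ) (hk : k < u.length) :
    u[k] = a ((i + k) % p) := by
  have hhole := hfull (i + k) (by omega)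
  rcases hocc ⟨k, hk⟩ with hw | hw
  · exact absurd hw hhole
  rcases ha (i + k) (by omega) with hper | hper
  · exact absurd hper hhole
  simpa using (hw.symm.trans hper)

theorem Recurrent.getElem_eq_getElem_add_of_periodic {w : ℕ → Option A} (hrec : Recurrent w)
    (hfin : {i | w i = none}.Finite) {N p : ℕ} {a : ℕ → A}
    (ha : ∀ k, N ≤ k → w k = none ∨ w k = some (a (k % p)))
    {u : List A} (hu : IsSubword w u) {j : ℕ} (hj : j + p < u.length) :
    u[j] = u[j + p] := by
  obtain ⟨B, hB⟩ := hfin.bddAbove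
  obtain ⟨i, hocc, hi⟩ := (hrec u hu).exists_gt (max N B)
  have hfull : ∀ k, i ≤ k → w k ≠ none := fun k hk hw => by
    have := hB hw
    omega
  have hget := hocc.getElem_eq_of_periodic ha (by omega) hfull
  rw [hget j (by omega), hget (j + p) hj, ← Nat.add_assoc, Nat.add_mod_right]

theorem stmt6 [Nontrivial A] (w : ℕ → Option A)
    (hfin : {i | w i = none}.Finite) (hpos : {i | w i = none}.Nonempty)
    (hrec : Recurrent w) :
    ¬ UltimatelyPeriodic w := by
  rintro ⟨N, p, hp, a, ha⟩
  obtain ⟨h, hh : w h = none⟩ := hpos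
  obtain ⟨b, c, hbc⟩ := exists_pair_ne A
  let fill (d : A) : ℕ → A := Function.update (fun j => (w j).getD b) h d
  have hfill (d : A) : IsCompletion w (fill d) := fun j x hw => by
    have hj : j ≠ h := by rintro rfl; simp [hh] at hw
    simp [fill, hj, hw]
  have determined (d : A) : d = (w (h + p)).getD b := by
    have hper := hrec.getElem_eq_getElem_add_of_periodic hfin ha
      ⟨0, (hfill d).occurs_ofFn 0 (h + p + 1)⟩ (j := h) (by simp)
    rw [List.getElem_ofFn, List.getElem_ofFn] at hper
    simpa [fill, hp.ne'] using hper
  exact hbc ((determined b).trans (determined c).symm)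
end

section
/- Let w be a uniformly recurrent infinite partial word such that for each n > 0 there exists an index i with w[i..i+n) hole-free. Then R_w(n) ≥ p_w(n) + n − 1 for all n ≥ 1. -/
open Set

variable {A : Type*}

/-! Take a window size `m` for which every length-`m` factor contains every length-`n` subword,
and apply it to a hole-free factor of length `m`. Inside a hole-free factor a full word is
determined by its starting position, and there are only `m - n + 1` starting positions, so
`p_w(n) ≤ m - n + 1`. Such window sizes exist because there are finitely many subwords of
length `n`, each occurring with bounded gaps. -/

def HoleFree (w : ℕ → Option A) (i n : ℕ) : Prop :=
  ∀ j < n, w (i + j) ≠ none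

theorem HoleFree.of_le {w : ℕ → Option A} {i m j n : ℕ} (h : HoleFree w i m) (hij : i ≤ j)
    (hjn : j + n ≤ i + m) : HoleFree w j n := by
  intro k hk
  have hshift : j + k = i + (j + k - i) := by omega
  rw [hshift]
  exact h _ (by omega)

theorem HoleFree.exists_occurs {w : ℕ → Option A} {i n : ℕ} (h : HoleFree w i n) :
    ∃ u : List A, u.length = n ∧ Occurs w u i :=
  ⟨List.ofFn fun j : Fin n => (w (i + j)).get (Option.ne_none_iff_isSome.mp (h j j.isLt)),
    List.length_ofFn, fun j => Or.inr (by simp)⟩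

theorem Occurs.eq_of_holeFree {w : ℕ → Option A} {u v : List A} {i : ℕ} (hu : Occurs w u i)
    (hv : Occurs w v i) (hlen : u.length = v.length) (hfree : HoleFree w i u.length) :
    u = v := by
  refine List.ext_get hlen fun k hk hk' => ?_
  have hne := hfree k hk
  rcases hu ⟨k, hk⟩, hv ⟨k, hk'⟩ with ⟨hu | hu, hv | hv⟩ <;> simp_all

theorem GoodWindow.le_of_isSubword {w : ℕ → Option A} {n m : ℕ} {u : List A}
    (hm : GoodWindow w n m) (hlen : u.length = n) (hu : IsSubword w u) : n ≤ m := by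
  obtain ⟨j, -, hj, -⟩ := hm u hlen hu 0
  omega

theorem GoodWindow.pcomp_le_of_holeFree {w : ℕ → Option A} {n m i : ℕ} (hm : GoodWindow w n m)
    (hfree : HoleFree w i m) : pcomp w n ≤ m - n + 1 := by
  set S := {u : List A | u.length = n ∧ IsSubword w u}
  have hpos : ∀ u ∈ S, ∃ j ∈ Icc i (i + (m - n)), HoleFree w j n ∧ Occurs w u j := by
    rintro u ⟨hlen, hu⟩
    obtain ⟨j, hij, hjm, hocc⟩ := hm u hlen hu i
    exact ⟨j, ⟨hij, by omega⟩, hfree.of_le hij hjm, hocc⟩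
  choose! f hf hfree_f hocc_f using hpos
  have hinj : InjOn f S := fun u hu v hv huv => by
    refine (hocc_f u hu).eq_of_holeFree (huv ▸ hocc_f v hv) (hu.1.trans hv.1.symm) ?_
    simpa [hu.1] using hfree_f u hu
  calc pcomp w n ≤ (Icc i (i + (m - n))).ncard :=
        ncard_le_ncard_of_injOn f hf hinj (finite_Icc _ _)
    _ = m - n + 1 := by
        rw [← Finset.coe_Icc, ncard_coe_finset, Nat.card_Icc]
        omega

theorem UniformlyRecurrent.exists_goodWindow [Finite A] {w : ℕ → Option A}
    (h : UniformlyRecurrent w) (n : ℕ) : ∃ m, GoodWindow w n m := by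
  have hfin : {u : List A | u.length = n ∧ IsSubword w u}.Finite :=
    (List.finite_length_eq A n).subset fun u hu => hu.1
  choose! f hf using h
  obtain ⟨M, hM⟩ := (hfin.image f).bddAbove
  refine ⟨M, fun u hlen hu i => ?_⟩
  obtain ⟨j, hij, hjm, hocc⟩ := hf u hu i
  have hfM : f u ≤ M := hM ⟨u, ⟨hlen, hu⟩, rfl⟩
  exact ⟨j, hij, by omega, hocc⟩

theorem stmt8 [Fintype A] (w : ℕ → Option A) (h : UniformlyRecurrent w)
    (hfull : ∀ n > 0, ∃ i, ∀ j < n, w (i + j) ≠ none) :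
    ∀ n ≥ 1, pcomp w n + n - 1 ≤ Rfun w n := by
  intro n hn
  obtain ⟨i₀, hi₀⟩ := hfull n hn
  obtain ⟨u₀, hlen, hocc⟩ := HoleFree.exists_occurs hi₀
  refine le_csInf (h.exists_goodWindow n) fun m hm => ?_
  have hnm : n ≤ m := GoodWindow.le_of_isSubword hm hlen ⟨i₀, hocc⟩
  obtain ⟨i, hi⟩ := hfull m (by omega)
  have hp := GoodWindow.pcomp_le_of_holeFree hm hi
  omega
end

section
/- Let w be a uniformly recurrent infinite partial word with finitely many holes, over an alphabet of size k ≥ 2. Then there exists N such that p_w(n) < k^n for all n ≥ N. -/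
open Set

variable {A : Type*}

theorem stmt10 [Fintype A] (hk : 2 ≤ Fintype.card A) (w : ℕ → Option A)
    (hfin : {i | w i = none}.Finite) (h : UniformlyRecurrent w) :
    ∃ N, ∀ n ≥ N, pcomp w n < Fintype.card A ^ n := by
  -- bound on holes
  obtain ⟨H, hH⟩ := hfin.bddAbove
  have hnohole : ∀ j, H < j → w j ≠ none := fun j hj hne =>
    absurd (hH hne) (not_le.mpr hj)
  -- pick a letter a occurring past the holes
  obtain ⟨a, ha⟩ : ∃ a : A, w (H + 1) = some a := by
    cases hwa : w (H + 1) with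
    | none => exact absurd hwa (hnohole _ (Nat.lt_succ_self H))
    | some a => exact ⟨a, rfl⟩
  have hsub_a : IsSubword w [a] := by
    refine ⟨H + 1, fun j => ?_⟩
    have : (j : ℕ) = 0 := Nat.lt_one_iff.mp (by simpa using j.isLt)
    rw [this]
    right
    simpa using ha
  obtain ⟨m, hm⟩ := h [a] hsub_a
  simp only [List.length_singleton] at hm
  -- pick b ≠ a
  obtain ⟨b, hb⟩ : ∃ b : A, b ≠ a := by
    by_contra hc
    push_neg at hc
    have : Fintype.card A ≤ 1 := Fintype.card_le_one_iff.mpr fun x y => (hc x).trans (hc y).symm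
    omega
  -- replicate n b is not a subword for n ≥ m
  have key : ∀ n, m ≤ n → ¬ IsSubword w (List.replicate n b) := by
    intro n hn hsub
    obtain ⟨m2, hm2⟩ := h _ hsub
    simp only [List.length_replicate] at hm2
    obtain ⟨j0, hj0i, _, hocc⟩ := hm2 (H + 1)
    obtain ⟨j, hj0j, hjm, hocca⟩ := hm j0
    have hja : w j = some a := by
      have := hocca ⟨0, by simp⟩
      simp only [Nat.add_zero] at this
      rcases this with h1 | h1
      · exact absurd h1 (hnohole _ (by omega))
      · simpa using h1
    have hjb : w j = some b := by
      have hlt : j - j0 < (List.replicate n b).length := by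
        simp only [List.length_replicate]; omega
      have := hocc ⟨j - j0, hlt⟩
      rcases this with h1 | h1
      · have hjj : j0 + (j - j0) = j := by omega
        rw [hjj] at h1
        exact absurd h1 (hnohole _ (by omega))
      · have hjj : j0 + (j - j0) = j := by omega
        rw [hjj] at h1
        rw [h1]
        congr 1
        simp
    rw [hja] at hjb
    exact hb (Option.some.injEq _ _ ▸ hjb.symm)
  refine ⟨m, fun n hn => ?_⟩
  have hfull : {u : List A | u.length = n}.Finite := List.finite_length_eq A n
  have hcard : {u : List A | u.length = n}.ncard = Fintype.card A ^ n := by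
    rw [← Nat.card_coe_set_eq]
    have : Nat.card {u : List A | u.length = n} = Nat.card (List.Vector A n) := rfl
    rw [this, Nat.card_eq_fintype_card, card_vector]
  rw [pcomp, ← hcard]
  apply Set.ncard_lt_ncard _ hfull
  constructor
  · intro u hu; exact hu.1
  · intro hcontra
    have hmem : List.replicate n b ∈ {u : List A | u.length = n} := by simp
    exact key n hn (hcontra hmem).2
end

section
/- Let w be an infinite recurrent partial word with finitely many holes. Then every completion ŵ of w is recurrent. -/
open Set

variable {A : Type*}

theorem stmt11 (w : ℕ → Option A) (hfin : {i | w i = none}.Finite)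
    (hrec : Recurrent w) (c : ℕ → A) (hc : IsCompletion w c) :
    Recurrent (fun i => some (c i)) := by
  rintro u ⟨i, hi⟩
  have hw : Occurs w u i := by
    intro j
    rcases h : w (i + (j : ℕ)) with _ | a
    · exact Or.inl rfl
    · right
      have h1 := hc (i + (j : ℕ)) a h
      have h2 := hi j
      simp only [Option.some.injEq, reduceCtorEq, false_or] at h2
      rw [← h1, h2]
  have hinf := hrec u ⟨i, hw⟩
  obtain ⟨N, hN⟩ := hfin.bddAbove
  have hsub : {k | Occurs w u k ∧ N < k} ⊆ {k | Occurs (fun i => some (c i)) u k} := by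
    rintro k ⟨hk, hkN⟩ j
    right
    rcases h : w (k + (j : ℕ)) with _ | a
    · exact absurd (hN h) (by omega)
    · rcases hk j with h' | h'
      · rw [h] at h'; cases h'
      · rw [h] at h'
        injection h' with h'
        simp [hc _ _ h, h']
  refine Set.Infinite.mono hsub ?_
  have h3 := hinf.diff (Set.finite_Iic N)
  apply h3.mono
  rintro k ⟨hk1, hk2⟩
  simp only [Set.mem_Iic, not_le] at hk2
  exact ⟨hk1, hk2⟩
end

section
/- Let w be an infinite partial word with finitely many holes. If every completion of w is recurrent, then w is recurrent. -/
open Set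

variable {A : Type*}

theorem stmt12 (w : ℕ → Option A) (hfin : {i | w i = none}.Finite)
    (h : ∀ c : ℕ → A, IsCompletion w c → Recurrent (fun i => some (c i))) :
    Recurrent w := by
  intro u hu
  rcases eq_or_ne u [] with rfl | hne
  · have : {i | Occurs w ([] : List A) i} = Set.univ := by
      ext i; simp [Occurs]
    rw [IsRecSubword, this]
    exact Set.infinite_univ
  · obtain ⟨i₀, hi₀⟩ := hu
    have hlen : 0 < u.length := List.length_pos_iff.mpr hne
    set c : ℕ → A := fun k =>
      match hk : w k with
      | some a => a
      | none =>
        if h : i₀ ≤ k ∧ k - i₀ < u.length then u.get ⟨k - i₀, h.2⟩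
        else u.get ⟨0, hlen⟩ with hc
    have hcomp : IsCompletion w c := by
      intro i a ha
      simp only [hc]
      split
      · next b hb => rw [ha] at hb; exact (Option.some_injective _ hb).symm
      · next hb => rw [ha] at hb; exact absurd hb (by simp)
    have hocc : Occurs (fun i => some (c i)) u i₀ := by
      intro j
      right
      congr 1
      simp only [hc]
      split
      · next a ha =>
        rcases hi₀ j with h1 | h1
        · rw [ha] at h1; exact absurd h1 (by simp)
        · rw [ha] at h1; simpa using h1
      · next ha =>
        have hcond : i₀ ≤ i₀ + (j : ℕ) ∧ i₀ + (j : ℕ) - i₀ < u.length := by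
          constructor
          · omega
          · simpa using j.2
        rw [dif_pos hcond]
        have : (⟨i₀ + (j : ℕ) - i₀, hcond.2⟩ : Fin u.length) = j := by
          apply Fin.ext; simp
        rw [this]
    have hrec := h c hcomp u ⟨i₀, hocc⟩
    refine Set.Infinite.mono ?_ hrec
    intro j hj
    intro k
    rcases hj k with h1 | h1
    · exact absurd h1 (by simp)
    · have : c (j + (k : ℕ)) = u.get k := Option.some_injective _ h1
      cases hw : w (j + (k : ℕ)) with
      | none => exact Or.inl rfl
      | some a =>
        right
        rw [hcomp _ a hw] at this
        rw [this]
end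

section
/- Let w be an infinite partial word with infinitely many holes. If there exists a completion ŵ of w with Sub(w) = Sub(ŵ), then w is recurrent. (Combined with the converse, for words with infinitely many holes: w is recurrent iff it has a completion with the same subword set.) -/
open Set

variable {A : Type*}

/-
Let `u` occur in `ŵ` at `q`, and pick a hole `h` of `w` beyond that occurrence. Since `w` has a
hole at `h`, the word `ŵ(0) ⋯ ŵ(h-1) b` is a subword of `w` for any letter `b`; taking `b ≠ ŵ(h)`,
it occurs in `ŵ` at some position `j > 0`, so `ŵ(j + s) = ŵ(s)` for `s < h`. Hence `u` also occurs
in `ŵ` at `j + q > q`. Thus the occurrences of `u` in `ŵ` have no largest element, and each of them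
is an occurrence in `w`.
-/

variable {w : ℕ → Option A} {c : ℕ → A}

theorem occurs_some_iff {u : List A} {i : ℕ} :
    Occurs (fun i => some (c i)) u i ↔ ∀ t : Fin u.length, c (i + t) = u.get t := by
  simp [Occurs]

theorem IsCompletion.occurs_of_occurs_some (hc : IsCompletion w c) {u : List A} {i : ℕ}
    (hu : Occurs (fun i => some (c i)) u i) : Occurs w u i := by
  intro t
  rcases hw : w (i + t) with _ | a
  · exact Or.inl rfl
  · rw [← hc _ a hw, occurs_some_iff.1 hu t]
    exact Or.inr rfl

theorem IsCompletion.occurs_prefix_update (hc : IsCompletion w c) {h : ℕ} (hh : w h = none)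
    (b : A) : Occurs w (List.ofFn fun t : Fin (h + 1) => Function.update c h b t) 0 := by
  intro t
  rcases hw : w (0 + t) with _ | a
  · exact Or.inl rfl
  · have ht : (t : ℕ) ≠ h := by rintro he; simp [he, hh] at hw
    simp only [zero_add] at hw
    simp only [List.get_eq_getElem, List.getElem_ofFn, Function.update_of_ne ht, hc _ a hw, or_true]

theorem IsCompletion.exists_shift_of_hole [Nontrivial A] (hc : IsCompletion w c)
    (hsub : ∀ u, IsSubword w u → IsSubword (fun i => some (c i)) u) {h : ℕ} (hh : w h = none) :
    ∃ j, 0 < j ∧ ∀ s < h, c (j + s) = c s := by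
  obtain ⟨b, hb⟩ := exists_ne (c h)
  obtain ⟨j, hj⟩ := hsub _ ⟨0, hc.occurs_prefix_update hh b⟩
  have hcj : ∀ s ≤ h, c (j + s) = Function.update c h b s := fun s hs => by
    simpa only [List.get_eq_getElem, List.getElem_ofFn] using
      occurs_some_iff.1 hj ⟨s, by rw [List.length_ofFn]; omega⟩
  refine ⟨j, Nat.pos_of_ne_zero fun hj0 => hb ?_, fun s hs => ?_⟩
  · simpa [hj0] using (hcj h le_rfl).symm
  · simpa [Function.update_of_ne hs.ne] using hcj s hs.le

theorem occurs_some_shift {u : List A} {q j h : ℕ} (hq : Occurs (fun i => some (c i)) u q)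
    (hqh : q + u.length ≤ h) (hj : ∀ s < h, c (j + s) = c s) :
    Occurs (fun i => some (c i)) u (j + q) := by
  rw [occurs_some_iff] at hq ⊢
  intro t
  rw [add_assoc, hj _ (by omega), hq t]

theorem stmt14 [Nontrivial A] (w : ℕ → Option A)
    (hinf : {i | w i = none}.Infinite) (c : ℕ → A) (hc : IsCompletion w c)
    (hsub : ∀ u : List A, IsSubword w u ↔ IsSubword (fun i => some (c i)) u) :
    Recurrent w := by
  intro u hu
  set S := {q | Occurs (fun i => some (c i)) u q}
  have hS : S.Infinite := by
    intro hfin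
    obtain ⟨q, hqS, hq_max⟩ := S.exists_max_image id hfin ((hsub u).1 hu)
    obtain ⟨h, hh, hqh⟩ := hinf.exists_gt (q + u.length)
    obtain ⟨j, hj0, hj⟩ := hc.exists_shift_of_hole (fun v => (hsub v).1) hh
    have hle : j + q ≤ q := hq_max _ (occurs_some_shift hqS hqh.le hj)
    omega
  exact hS.mono fun q => hc.occurs_of_occurs_some
end

section
/- Let w be an infinite partial word with infinitely many holes over an alphabet of size k ≥ 2. Then the number of non-recurrent subwords d_w(n) = p_w(n) − r_w(n) is either identically zero or unbounded. -/
open Set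

variable {A : Type*}

/-!
If every subword of `w` is recurrent then `p_w = r_w`. Otherwise some subword `u` occurring at
`i` is not recurrent, and neither is any word extending `u`. Take `C + 1` holes to the right of
this occurrence; for each of them, complete `w` by writing a letter `b` into that hole and a
different letter `a` into all other holes. Appending to `u` the factor of such a completion
that runs from `i + |u|` past the last chosen hole gives `C + 1` distinct words of one common
length, each occurring at `i` and none recurrent, so `d_w` exceeds `C` at that length.
-/

section

variable {w : ℕ → Option A} {u v : List A} {i : ℕ}

theorem Occurs.append (hu : Occurs w u i) (hv : Occurs w v (i + u.length)) :
    Occurs w (u ++ v) i := by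
  intro ⟨j, hj⟩
  by_cases hju : j < u.length
  · simpa [List.getElem_append_left hju] using hu ⟨j, hju⟩
  · have hjv : j - u.length < v.length := by simp only [List.length_append] at hj; omega
    have hpos : i + u.length + (j - u.length) = i + j := by omega
    simpa [List.getElem_append_right (Nat.le_of_not_lt hju), hpos] using hv ⟨_, hjv⟩

theorem Occurs.of_prefix (huv : u <+: v) (hv : Occurs w v i) : Occurs w u i := by
  intro ⟨j, hj⟩
  simpa [huv.getElem hj] using hv ⟨j, huv.length_le.trans_lt' hj⟩

theorem IsRecSubword.isSubword (hu : IsRecSubword w u) : IsSubword w u :=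
  hu.nonempty

theorem IsRecSubword.of_prefix (huv : u <+: v) (hv : IsRecSubword w v) :
    IsRecSubword w u :=
  hv.mono fun _ => Occurs.of_prefix huv

def factor (c : ℕ → A) (i n : ℕ) : List A :=
  List.ofFn fun q : Fin n => c (i + q)

theorem IsCompletion.occurs_factor {c : ℕ → A} (hc : IsCompletion w c) (i n : ℕ) :
    Occurs w (factor c i n) i := by
  intro ⟨j, hj⟩
  cases h : w (i + j) with
  | none => exact Or.inl rfl
  | some a => simp [factor, hc _ a h]

theorem IsCompletion.update_of_eq_none {c : ℕ → A} (hc : IsCompletion w c)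
    {j : ℕ} (hj : w j = none) (a : A) : IsCompletion w (Function.update c j a) := by
  intro p b hp
  have hpj : p ≠ j := by rintro rfl; simp [hj] at hp
  simpa [Function.update_of_ne hpj] using hc p b hp

theorem factor_update_injOn (c : ℕ → A) {a : A} {s n : ℕ} {H : Set ℕ}
    (hH : H ⊆ Ico s (s + n)) (hca : ∀ j ∈ H, c j ≠ a) :
    InjOn (fun j => factor (Function.update c j a) s n) H := by
  intro j hj j' hj' heq
  by_contra hne
  obtain ⟨hsj, hjn⟩ := hH hj
  have := congrFun (List.ofFn_injective heq) ⟨j - s, by omega⟩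
  have hpos : s + (j - s) = j := by omega
  simp only [hpos, Function.update_self, Function.update_of_ne hne] at this
  exact hca j hj this.symm

theorem pcomp_sub_rcomp_eq_zero_of_recurrent (hw : Recurrent w) (n : ℕ) :
    pcomp w n - rcomp w n = 0 := by
  have : pcomp w n = rcomp w n := by
    unfold pcomp rcomp
    congr 1
    ext u
    exact and_congr_right fun _ => ⟨hw u, IsRecSubword.isSubword⟩
  omega

theorem ncard_le_pcomp_sub_rcomp [Finite A] {n : ℕ} {S : Set (List A)}
    (hS : ∀ u ∈ S, u.length = n ∧ IsSubword w u ∧ ¬ IsRecSubword w u) :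
    S.ncard ≤ pcomp w n - rcomp w n := by
  have hsub_fin : {u : List A | u.length = n ∧ IsSubword w u}.Finite :=
    (List.finite_length_eq A n).subset fun _ hu => hu.1
  have hrec_sub : {u : List A | u.length = n ∧ IsRecSubword w u} ⊆
      {u | u.length = n ∧ IsSubword w u} :=
    fun _ hu => ⟨hu.1, hu.2.isSubword⟩
  unfold pcomp rcomp
  rw [← Set.ncard_sdiff hrec_sub (hsub_fin.subset hrec_sub)]
  exact Set.ncard_le_ncard (fun u hu => ⟨⟨(hS u hu).1, (hS u hu).2.1⟩,
    fun h => (hS u hu).2.2 h.2⟩) hsub_fin.sdiff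

theorem exists_lt_pcomp_sub_rcomp [Finite A] (hholes : {i | w i = none}.Infinite) {a b : A}
    (hab : a ≠ b) (hu : IsSubword w u) (hnr : ¬ IsRecSubword w u) (C : ℕ) :
    ∃ n, C < pcomp w n - rcomp w n := by
  obtain ⟨i, hi⟩ := hu
  set s := i + u.length
  obtain ⟨H, hH_holes, hH_card⟩ := (hholes.sdiff (finite_Iio s)).exists_subset_card_eq (C + 1)
  obtain ⟨M, hM⟩ := H.exists_le
  set n := M + 1
  have hH : (H : Set ℕ) ⊆ Ico s (s + n) := fun j hj =>
    ⟨not_lt.mp (hH_holes hj).2, by have := hM j hj; omega⟩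
  set c : ℕ → A := fun p => (w p).getD a
  have hc : IsCompletion w c := fun p x hp => by simp [c, hp]
  have hcb : ∀ j ∈ (H : Set ℕ), c j ≠ b := fun j hj => by
    have hj_hole : w j = none := (hH_holes hj).1
    simpa [c, hj_hole] using hab
  set V : ℕ → List A := fun j => u ++ factor (Function.update c j b) s n
  have hV_inj : InjOn V H := fun j hj j' hj' heq =>
    factor_update_injOn c hH hcb hj hj' (List.append_cancel_left heq)
  refine ⟨u.length + n, ?_⟩
  calc C < (V '' H).ncard := by rw [hV_inj.ncard_image, ncard_coe_finset]; omega
    _ ≤ _ := ncard_le_pcomp_sub_rcomp ?_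
  rintro _ ⟨j, hj, rfl⟩
  refine ⟨by simp [V, factor, n], ⟨i, hi.append ?_⟩, fun hrec => hnr ?_⟩
  · exact (hc.update_of_eq_none (hH_holes hj).1 b).occurs_factor s n
  · exact hrec.of_prefix (List.prefix_append u _)

end

theorem stmt17 [Fintype A] (hk : 2 ≤ Fintype.card A) (w : ℕ → Option A)
    (hinf : {i | w i = none}.Infinite) :
    (∀ n, pcomp w n - rcomp w n = 0) ∨
      (∀ C, ∃ n, C < pcomp w n - rcomp w n) := by
  by_cases hw : Recurrent w
  · exact Or.inl (pcomp_sub_rcomp_eq_zero_of_recurrent hw)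
  · right
    obtain ⟨u, hu, hnr⟩ : ∃ u, IsSubword w u ∧ ¬ IsRecSubword w u := by
      simpa [Recurrent] using hw
    obtain ⟨a, b, hab⟩ := Fintype.exists_pair_of_one_lt_card hk
    exact exists_lt_pcomp_sub_rcomp hinf hab hu hnr
end

section
/- Let w be an ultimately recurrent infinite partial word. Then there exists a constant C such that r_w(n) ≤ p_w(n) ≤ C · r_w(n) for all sufficiently large n; that is, p_w(n) = Θ(r_w(n)). -/
open Set

variable {A : Type*}

/-!
If the shift `σ_p(w)` is recurrent, every full word occurring in `w` at a position `≥ p` is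
recurrent. Hence, for `n ≥ p`, a subword `u` of length `n` is determined by its first `p` letters
together with `u.drop p`, a recurrent word of length `n - p`, so `p_w(n) ≤ |A|^p r_w(n - p)`.
Finally `r_w` is nondecreasing: among the infinitely many occurrences of a recurrent word, the
letters (holes filled arbitrarily) that follow it take finitely many values, so some right
extension of it is again recurrent.
-/

theorem Set.Infinite.exists_infinite_fiber_of_mapsTo {α β : Type*} {s : Set α} {t : Set β}
    {f : α → β} (hs : s.Infinite) (hf : MapsTo f s t) (ht : t.Finite) :
    ∃ b ∈ t, (s ∩ f ⁻¹' {b}).Infinite := by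
  by_contra! hfin
  refine hs ((ht.biUnion hfin).subset fun a ha => ?_)
  exact mem_biUnion (hf ha) ⟨ha, rfl⟩

section Words

variable {w : ℕ → Option A} {u v : List A} {i : ℕ}

theorem occurs_shift_iff {p : ℕ} : Occurs (fun j => w (j + p)) u i ↔ Occurs w u (i + p) := by
  simp only [Occurs, Nat.add_right_comm]

theorem Occurs.drop (hu : Occurs w u i) (k : ℕ) : Occurs w (u.drop k) (i + k) := by
  intro ⟨j, hj⟩
  simp only [List.length_drop] at hj
  simpa [Nat.add_assoc] using hu ⟨k + j, by omega⟩

theorem exists_occurs_of_length [Nonempty A] (w : ℕ → Option A) (i n : ℕ) :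
    ∃ u : List A, u.length = n ∧ Occurs w u i := by
  inhabit A
  refine ⟨List.ofFn fun j : Fin n => (w (i + j)).getD default, List.length_ofFn, fun j => ?_⟩
  rcases h : w (i + j) with _ | a <;> simp [h]

theorem Recurrent.isRecSubword_of_occurs {p : ℕ} (hr : Recurrent fun j => w (j + p))
    (hu : Occurs w u i) (hi : p ≤ i) : IsRecSubword w u := by
  obtain ⟨k, rfl⟩ : ∃ k, i = k + p := ⟨i - p, by omega⟩
  refine ((hr u ⟨k, occurs_shift_iff.2 hu⟩).image (add_left_injective p).injOn).mono ?_
  rintro _ ⟨j, hj, rfl⟩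
  exact occurs_shift_iff.1 hj

theorem IsRecSubword.exists_extension [Finite A] [Nonempty A] {n : ℕ}
    (hv : IsRecSubword w v) (hn : v.length ≤ n) :
    ∃ u : List A, u.length = n ∧ IsRecSubword w u ∧ v <+: u := by
  choose t ht_len ht using fun i => exists_occurs_of_length w (i + v.length) (n - v.length)
  obtain ⟨u, hu_len, hu⟩ := Infinite.exists_infinite_fiber_of_mapsTo hv
    (f := fun i => v ++ t i) (fun i _ => by simp [ht_len]; omega) (List.finite_length_eq A n)
  obtain ⟨i, -, rfl⟩ := hu.nonempty
  refine ⟨_, hu_len, hu.mono ?_, List.prefix_append _ _⟩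
  rintro j ⟨hj, hji : v ++ t j = v ++ t i⟩
  change Occurs w (v ++ t i) j
  exact hji ▸ hj.append (ht j)

end Words

theorem List.ncard_length_eq [Fintype A] (n : ℕ) :
    {l : List A | l.length = n}.ncard = Fintype.card A ^ n := by
  rw [← Nat.card_coe_set_eq, ← card_vector, ← Nat.card_eq_fintype_card]
  rfl

section Complexity

variable (w : ℕ → Option A)

theorem rcomp_le_pcomp [Finite A] (n : ℕ) : rcomp w n ≤ pcomp w n :=
  ncard_le_ncard (fun _ hu => ⟨hu.1, hu.2.isSubword⟩)
    ((List.finite_length_eq A n).subset fun _ hu => hu.1)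

theorem pcomp_eq_zero_of_isEmpty [IsEmpty A] {n : ℕ} (hn : n ≠ 0) : pcomp w n = 0 := by
  rw [pcomp, ncard_eq_zero]
  refine eq_empty_of_forall_notMem fun u hu => hn ?_
  cases u with
  | nil => exact hu.1.symm
  | cons a _ => exact isEmptyElim a

theorem rcomp_mono [Finite A] [Nonempty A] : Monotone (rcomp w) := by
  intro m n hmn
  unfold rcomp
  choose! F hF using fun v (hv : v ∈ {v : List A | v.length = m ∧ IsRecSubword w v}) =>
    hv.2.exists_extension (hv.1 ▸ hmn)
  refine ncard_le_ncard_of_injOn F (fun v hv => ⟨(hF v hv).1, (hF v hv).2.1⟩)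
    (fun v₁ h₁ v₂ h₂ he => ?_) ((List.finite_length_eq A n).subset fun _ hu => hu.1)
  have h₂' : v₂ <+: F v₁ := he ▸ (hF v₂ h₂).2.2
  have hlen : v₁.length = v₂.length := h₁.1.trans h₂.1.symm
  exact (List.prefix_of_prefix_length_le (hF v₁ h₁).2.2 h₂' hlen.le).eq_of_length hlen

theorem pcomp_le_card_pow_mul_rcomp_sub [Fintype A] {p n : ℕ}
    (hr : Recurrent fun j => w (j + p)) (hpn : p ≤ n) :
    pcomp w n ≤ Fintype.card A ^ p * rcomp w (n - p) := by
  rw [rcomp, ← List.ncard_length_eq, ← ncard_prod]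
  refine ncard_le_ncard_of_injOn (fun u => (u.take p, u.drop p)) ?_ ?_
    ((List.finite_length_eq A p).prod ((List.finite_length_eq A _).subset fun _ hu => hu.1))
  · rintro u ⟨hu_len, i, hu⟩
    exact mk_mem_prod (by simp [hu_len, hpn])
      ⟨by simp [hu_len], hr.isRecSubword_of_occurs (hu.drop p) (Nat.le_add_left p i)⟩
  · rintro u₁ - u₂ - he
    obtain ⟨h_take, h_drop⟩ : u₁.take p = u₂.take p ∧ u₁.drop p = u₂.drop p :=
      Prod.ext_iff.mp he
    rw [← List.take_append_drop p u₁, ← List.take_append_drop p u₂, h_take, h_drop]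

end Complexity

theorem stmt18 [Fintype A] (w : ℕ → Option A) (h : UltimatelyRecurrent w) :
    ∃ C N, ∀ n ≥ N, rcomp w n ≤ pcomp w n ∧ pcomp w n ≤ C * rcomp w n := by
  obtain ⟨p, hr⟩ := h
  refine ⟨Fintype.card A ^ p, p + 1, fun n hn => ⟨rcomp_le_pcomp w n, ?_⟩⟩
  rcases isEmpty_or_nonempty A with _ | _
  · simp [pcomp_eq_zero_of_isEmpty w (by omega : n ≠ 0)]
  · calc pcomp w n ≤ Fintype.card A ^ p * rcomp w (n - p) :=
          pcomp_le_card_pow_mul_rcomp_sub w hr (by omega)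
      _ ≤ Fintype.card A ^ p * rcomp w n := Nat.mul_le_mul_left _ (rcomp_mono w (Nat.sub_le n p))
end
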